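/- arXiv:1504.03438 — 3 statements merged into one kernel-verified Lean document; each statement's English description precedes it below -/
import Mathlib

section
/- For every real number σ, the value ξ(σ) of the complete Riemann zeta function at the real point σ is a positive real number, i.e. ξ(σ) has zero imaginary part and strictly positive real part. -/
/-!
By the functional equation `ξ(1 - s) = ξ(s)` it suffices to treat `σ > 0`, where
`ξ(σ) = σ(σ - 1) Γℝ(σ) ζ(σ)` with `Γℝ(σ) > 0`; also `ξ(1) = 1`. For `σ > 1` all factors are
positive. For `0 < σ < 1` both `σ(σ - 1)` and `ζ(σ)` are negative: the alternating series
`η(σ) = ∑ (-1)^(n+1) n^(-σ)` is positive, and `η(s) = (1 - 2^(1-s)) ζ(s)` continues analytically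
from `re s > 1` to `re s > 0`, while `1 - 2^(1-σ) < 0`. Positivity is expressed in `ComplexOrder`,
where `0 < z` means that `z` is a positive real.
-/

open MeasureTheory

/-- The complete Riemann zeta function `ξ(s) = s(s-1)π^{-s/2}Γ(s/2)ζ(s)`,
expressed via the entire function `completedRiemannZeta₀`. -/
noncomputable def xi (s : ℂ) : ℂ := s * (s - 1) * completedRiemannZeta₀ s + 1

open Complex Set
open scoped ComplexOrder

lemma norm_cpow_neg_sub_cpow_neg_add_one_le {x : ℝ} (hx : 0 < x) {s : ℂ} (hs : -1 ≤ s.re) :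
    ‖(x : ℂ) ^ (-s) - ((x + 1 : ℝ) : ℂ) ^ (-s)‖ ≤ ‖s‖ * x ^ (-s.re - 1) := by
  have hderiv : ∀ y ∈ Icc x (x + 1), HasDerivWithinAt (fun t : ℝ ↦ (t : ℂ) ^ (-s))
      (-s * (y : ℂ) ^ (-s - 1)) (Icc x (x + 1)) y := fun y hy ↦ by
    simpa using ((hasDerivAt_id (y : ℂ)).cpow_const (c := -s)
      (ofReal_mem_slitPlane.2 (hx.trans_le hy.1))).comp_ofReal.hasDerivWithinAt
  have hbound : ∀ y ∈ Icc x (x + 1), ‖-s * (y : ℂ) ^ (-s - 1)‖ ≤ ‖s‖ * x ^ (-s.re - 1) := by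
    intro y hy
    rw [norm_mul, norm_neg, norm_cpow_eq_rpow_re_of_pos (hx.trans_le hy.1)]
    gcongr
    simpa using Real.rpow_le_rpow_of_nonpos hx hy.1 (by linarith)
  simpa using Convex.norm_image_sub_le_of_norm_hasDerivWithin_le hderiv hbound (convex_Icc _ _)
    (right_mem_Icc.2 (by linarith)) (left_mem_Icc.2 (by linarith))

lemma summable_two_mul_add_one_rpow {p : ℝ} (hp : p < -1) :
    Summable fun k : ℕ ↦ (2 * k + 1 : ℝ) ^ p := by
  have hshift : Summable fun k : ℕ ↦ ((k + 1 : ℕ) : ℝ) ^ p :=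
    (summable_nat_add_iff 1).2 (Real.summable_nat_rpow.2 hp)
  refine .of_nonneg_of_le (fun k ↦ by positivity) (fun k ↦ ?_) hshift
  exact Real.rpow_le_rpow_of_nonpos (by positivity) (by push_cast; linarith) (by linarith)

noncomputable def etaPair (k : ℕ) (s : ℂ) : ℂ := (2 * k + 1 : ℂ) ^ (-s) - (2 * k + 2 : ℂ) ^ (-s)

/-- Dirichlet's eta function `∑ (-1)^(n+1) n^(-s)`, with its terms grouped in pairs so that the
series converges absolutely on `0 < re s`. -/
noncomputable def dirichletEta (s : ℂ) : ℂ := ∑' k : ℕ, etaPair k s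

lemma norm_etaPair_le (k : ℕ) {s : ℂ} (hs : -1 ≤ s.re) :
    ‖etaPair k s‖ ≤ ‖s‖ * (2 * k + 1 : ℝ) ^ (-s.re - 1) := by
  have := norm_cpow_neg_sub_cpow_neg_add_one_le (x := 2 * k + 1) (by positivity) hs
  push_cast at this
  rwa [add_assoc, one_add_one_eq_two] at this

lemma summable_etaPair {s : ℂ} (hs : 0 < s.re) : Summable fun k ↦ etaPair k s :=
  .of_norm_bounded ((summable_two_mul_add_one_rpow (by linarith)).mul_left ‖s‖)
    fun k ↦ norm_etaPair_le k (by linarith)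

lemma differentiableAt_dirichletEta {s : ℂ} (hs : 0 < s.re) :
    DifferentiableAt ℂ dirichletEta s := by
  set U : Set ℂ := {w | s.re / 2 < w.re ∧ ‖w‖ < ‖s‖ + 1}
  have hU : IsOpen U :=
    (isOpen_lt continuous_const continuous_re).inter (isOpen_lt continuous_norm continuous_const)
  have hsU : s ∈ U := ⟨by linarith, by linarith⟩
  refine (differentiableOn_tsum_of_summable_norm
    ((summable_two_mul_add_one_rpow (p := -(s.re / 2) - 1) (by linarith)).mul_left (‖s‖ + 1))
    (fun k ↦ ?_) hU (fun k w hw ↦ ?_)).differentiableAt (hU.mem_nhds hsU)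
  · refine (Differentiable.sub ?_ ?_).differentiableOn <;>
      refine differentiable_neg.const_cpow (Or.inl ?_) <;> norm_cast
  · refine (norm_etaPair_le k (by linarith [hw.1])).trans ?_
    gcongr
    exacts [hw.2.le, by simp, hw.1.le]

lemma dirichletEta_eq_of_one_lt_re {s : ℂ} (hs : 1 < s.re) :
    dirichletEta s = (1 - 2 ^ (1 - s)) * riemannZeta s := by
  set f : ℕ → ℂ := fun n ↦ (n + 1 : ℂ) ^ (-s)
  have hf : HasSum f (riemannZeta s) := by
    have hsum : Summable f := by
      simpa [f, cpow_neg] using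
        (summable_nat_add_iff 1).2 (Complex.summable_one_div_nat_cpow.2 hs)
    simpa [zeta_eq_tsum_one_div_nat_add_one_cpow hs, f, cpow_neg] using hsum.hasSum
  have hodd : HasSum (fun k ↦ f (2 * k + 1)) (2 ^ (-s) * riemannZeta s) := by
    refine (hf.mul_left _).congr_fun fun k ↦ ?_
    simp only [f]
    rw [show ((2 * k + 1 : ℕ) + 1 : ℂ) = (2 : ℕ) * (k + 1 : ℕ) by push_cast; ring,
      natCast_mul_natCast_cpow]
    push_cast
    rfl
  have heven : HasSum (fun k ↦ f (2 * k)) (riemannZeta s - 2 ^ (-s) * riemannZeta s) := by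
    have hsum : Summable fun k ↦ f (2 * k) :=
      hf.summable.comp_injective (mul_right_injective₀ two_ne_zero)
    rw [← hodd.tsum_eq, ← hf.tsum_eq, ← tsum_even_add_odd hsum hodd.summable, add_sub_cancel_right]
    exact hsum.hasSum
  have h2 : (2 : ℂ) ^ (1 - s) = 2 * 2 ^ (-s) := by
    rw [sub_eq_add_neg, cpow_add _ _ two_ne_zero, cpow_one]
  rw [dirichletEta, ((heven.sub hodd).congr_fun fun k ↦ ?_).tsum_eq, h2]
  · ring
  · simp only [etaPair, f]
    push_cast
    ring_nf

/-- The factor `s - 1` cancels the pole of `ζ`, so both sides are analytic on the convex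
half-plane `0 < re s`. -/
lemma sub_one_mul_dirichletEta {s : ℂ} (hs : 0 < s.re) :
    (s - 1) * dirichletEta s = (1 - 2 ^ (1 - s)) * riemannZeta₁ s := by
  have hH : IsOpen {w : ℂ | 0 < w.re} := isOpen_lt continuous_const continuous_re
  have hη : AnalyticOnNhd ℂ (fun w ↦ (w - 1) * dirichletEta w) {w : ℂ | 0 < w.re} :=
    DifferentiableOn.analyticOnNhd (fun w hw ↦ ((differentiableAt_id.sub_const 1).mul
      (differentiableAt_dirichletEta hw)).differentiableWithinAt) hH
  have hζ : AnalyticOnNhd ℂ (fun w ↦ (1 - 2 ^ (1 - w)) * riemannZeta₁ w) {w : ℂ | 0 < w.re} :=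
    DifferentiableOn.analyticOnNhd (by fun_prop) hH
  refine hη.eqOn_of_preconnected_of_eventuallyEq hζ (convex_halfSpace_re_gt 0).isPreconnected
    (z₀ := 2) (by simp) ?_ hs
  filter_upwards [(isOpen_lt continuous_const continuous_re).mem_nhds
    (show (1 : ℝ) < (2 : ℂ).re by simp)] with w hw
  have hw1 : w ≠ 1 := by rintro rfl; simp at hw
  rw [dirichletEta_eq_of_one_lt_re hw, riemannZeta_eq_inv_sub_mul hw1]
  field_simp [sub_ne_zero.2 hw1]

lemma dirichletEta_eq {s : ℂ} (hs : 0 < s.re) (h1 : s ≠ 1) :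
    dirichletEta s = (1 - 2 ^ (1 - s)) * riemannZeta s := by
  have hs1 : s - 1 ≠ 0 := sub_ne_zero.2 h1
  rw [riemannZeta_eq_inv_sub_mul h1, ← mul_right_inj' hs1, sub_one_mul_dirichletEta hs]
  field_simp

lemma etaPair_ofReal (k : ℕ) (σ : ℝ) :
    etaPair k σ = ((2 * k + 1 : ℝ) ^ (-σ) - (2 * k + 2 : ℝ) ^ (-σ) : ℝ) := by
  push_cast [ofReal_cpow (by positivity : (0 : ℝ) ≤ 2 * k + 1),
    ofReal_cpow (by positivity : (0 : ℝ) ≤ 2 * k + 2)]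
  rfl

lemma dirichletEta_pos {σ : ℝ} (hσ : 0 < σ) : 0 < dirichletEta σ := by
  refine (summable_etaPair (by simpa)).tsum_pos (fun k ↦ ?_) 0 ?_
  · rw [etaPair_ofReal, zero_le_real, sub_nonneg]
    exact Real.rpow_le_rpow_of_nonpos (by positivity) (by linarith) (by linarith)
  · rw [etaPair_ofReal, zero_lt_real, sub_pos]
    simp only [CharP.cast_eq_zero, mul_zero, zero_add, Real.one_rpow]
    exact Real.rpow_lt_one_of_one_lt_of_neg one_lt_two (by linarith)

lemma riemannZeta_neg_of_pos_of_lt_one {σ : ℝ} (h0 : 0 < σ) (h1 : σ < 1) :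
    riemannZeta σ < 0 := by
  have hfactor : (1 : ℂ) - 2 ^ (1 - (σ : ℂ)) < 0 := by
    rw [show (1 : ℂ) - 2 ^ (1 - (σ : ℂ)) = ((1 - (2 : ℝ) ^ (1 - σ) : ℝ) : ℂ) by
      push_cast [ofReal_cpow zero_le_two]; rfl]
    exact_mod_cast sub_neg.2 (Real.one_lt_rpow one_lt_two (by linarith))
  have hprod : 0 < -((1 : ℂ) - 2 ^ (1 - (σ : ℂ))) * -riemannZeta σ := by
    rw [neg_mul_neg, ← dirichletEta_eq (by simpa) (by exact_mod_cast h1.ne)]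
    exact dirichletEta_pos h0
  exact neg_pos.1 ((pos_iff_pos_of_mul_pos hprod).1 (neg_pos.2 hfactor))

lemma Gammaℝ_ofReal_pos {σ : ℝ} (h : 0 < σ) : 0 < Gammaℝ σ := by
  have hΓ : Gammaℝ σ = (Real.pi ^ (-σ / 2) * Real.Gamma (σ / 2) : ℝ) := by
    push_cast [Gammaℝ_def, ofReal_cpow Real.pi_pos.le, ← Gamma_ofReal]
    rfl
  have := Real.Gamma_pos_of_pos (half_pos h)
  rw [hΓ]
  positivity

lemma xi_one_sub (s : ℂ) : xi (1 - s) = xi s := by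
  simp only [xi, completedRiemannZeta₀_one_sub]
  ring

lemma xi_eq_mul_Gammaℝ_mul_riemannZeta {s : ℂ} (h0 : 0 < s.re) (h1 : s ≠ 1) :
    xi s = s * (s - 1) * (Gammaℝ s * riemannZeta s) := by
  have hs0 : s ≠ 0 := ne_zero_of_re_pos h0
  have hs1 : 1 - s ≠ 0 := sub_ne_zero.2 h1.symm
  rw [riemannZeta_def_of_ne_zero hs0, mul_div_cancel₀ _ (Gammaℝ_ne_zero_of_re_pos h0), xi,
    completedRiemannZeta_eq]
  field_simp
  ring

lemma xi_pos_of_pos {σ : ℝ} (h : 0 < σ) : 0 < xi σ := by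
  rcases lt_trichotomy σ 1 with hlt | rfl | hgt
  · rw [xi_eq_mul_Gammaℝ_mul_riemannZeta (by simpa) (by exact_mod_cast hlt.ne)]
    refine mul_pos_of_neg_of_neg ?_ (mul_neg_of_pos_of_neg (Gammaℝ_ofReal_pos h)
      (riemannZeta_neg_of_pos_of_lt_one h hlt))
    exact_mod_cast mul_neg_of_pos_of_neg h (sub_neg.2 hlt)
  · simp [xi]
  · rw [xi_eq_mul_Gammaℝ_mul_riemannZeta (by simpa) (by exact_mod_cast hgt.ne')]
    refine mul_pos ?_ (mul_pos (Gammaℝ_ofReal_pos h) (riemannZeta_pos_of_one_lt hgt))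
    exact_mod_cast mul_pos h (sub_pos.2 hgt)

theorem xi_real_pos (σ : ℝ) : (xi σ).im = 0 ∧ 0 < (xi σ).re := by
  have hpos : 0 < xi σ := by
    rcases lt_or_ge 0 σ with h | h
    · exact xi_pos_of_pos h
    · simpa [xi_one_sub] using xi_pos_of_pos (σ := 1 - σ) (by linarith)
  exact ⟨(pos_iff.1 hpos).2.symm, (pos_iff.1 hpos).1⟩
end

section
/- For every complex number α with Re(α) > 0 and every real number z, α/(α − iz) = exp( ∫₀^∞ (e^{izx} − 1) x^{−1} e^{−αx} dx ), the integral converging absolutely. -/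
/-!
Write `F z` for the integral. Differentiating under the integral sign (the `z`-derivative of the
integrand is `I * exp ((I z - α) x)`, dominated by `exp (-Re α · x)`) gives
`F' z = I / (α - I z)`, which is also the derivative of `log α - log (α - I z)`; the argument
`α - I z` stays in the right half-plane, where `log` is holomorphic. Both functions vanish at
`z = 0`, so they agree, and exponentiating gives `α / (α - I z)`.
-/

open MeasureTheory Complex Set Filter

namespace ExpDistribution

noncomputable def levyIntegrand (α : ℂ) (z x : ℝ) : ℂ :=
  (cexp (I * z * x) - 1) * (x : ℂ)⁻¹ * cexp (-α * x)

lemma norm_levyIntegrand_le (α : ℂ) (z : ℝ) {x : ℝ} (hx : 0 < x) :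
    ‖levyIntegrand α z x‖ ≤ |z| * Real.exp (-α.re * x) := by
  have hosc : ‖cexp (I * z * x) - 1‖ ≤ |z| * x := by
    have h := Real.norm_exp_I_mul_ofReal_sub_one_le (x := z * x)
    rwa [ofReal_mul, ← mul_assoc, Real.norm_eq_abs, abs_mul, abs_of_pos hx] at h
  have hdecay : ‖cexp (-α * x)‖ = Real.exp (-α.re * x) := by simp [Complex.norm_exp]
  calc ‖levyIntegrand α z x‖
      = ‖cexp (I * z * x) - 1‖ * x⁻¹ * Real.exp (-α.re * x) := by
        rw [levyIntegrand, norm_mul, norm_mul, norm_inv, norm_real, Real.norm_of_nonneg hx.le,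
          hdecay]
    _ ≤ |z| * x * x⁻¹ * Real.exp (-α.re * x) := by gcongr
    _ = |z| * Real.exp (-α.re * x) := by field_simp

lemma integrableOn_levyIntegrand {α : ℂ} (hα : 0 < α.re) (z : ℝ) :
    IntegrableOn (levyIntegrand α z) (Ioi 0) := by
  refine Integrable.mono' ((exp_neg_integrableOn_Ioi 0 hα).const_mul |z|) ?_ ?_
  · refine ContinuousOn.aestronglyMeasurable ?_ measurableSet_Ioi
    intro x hx
    have hx0 : (x : ℂ) ≠ 0 := ofReal_ne_zero.mpr (ne_of_gt hx)
    unfold levyIntegrand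
    fun_prop (disch := exact hx0)
  · filter_upwards [ae_restrict_mem measurableSet_Ioi] with x hx
    exact norm_levyIntegrand_le α z hx

lemma hasDerivAt_levyIntegrand (α : ℂ) {x : ℝ} (hx : x ≠ 0) (w : ℝ) :
    HasDerivAt (fun w => levyIntegrand α w x) (I * cexp ((I * w - α) * x)) w := by
  have h := (((((hasDerivAt_id w).ofReal_comp.const_mul I).mul_const (x : ℂ)).cexp.sub_const 1)
    |>.mul_const (x : ℂ)⁻¹).mul_const (cexp (-α * x))
  refine h.congr_deriv ?_
  have hx0 : (x : ℂ) ≠ 0 := ofReal_ne_zero.mpr hx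
  rw [show (I * w - α) * x = I * w * x + -α * x by ring, Complex.exp_add]
  simp only [id, ofReal_one, mul_one]
  field_simp

lemma integral_Ioi_I_mul_cexp {α : ℂ} (hα : 0 < α.re) (w : ℝ) :
    ∫ x in Ioi (0 : ℝ), I * cexp ((I * w - α) * x) = I / (α - I * w) := by
  have hre : (I * w - α).re < 0 := by simpa using hα
  rw [integral_const_mul, integral_exp_mul_complex_Ioi hre]
  simp [div_eq_mul_inv, ← inv_neg]

lemma hasDerivAt_integral_levyIntegrand {α : ℂ} (hα : 0 < α.re) (w : ℝ) :
    HasDerivAt (fun w => ∫ x in Ioi (0 : ℝ), levyIntegrand α w x) (I / (α - I * w)) w := by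
  rw [← integral_Ioi_I_mul_cexp hα w]
  refine (hasDerivAt_integral_of_dominated_loc_of_deriv_le (s := univ)
    (bound := fun x => Real.exp (-α.re * x)) univ_mem
    (Eventually.of_forall fun w => (integrableOn_levyIntegrand hα w).aestronglyMeasurable)
    (integrableOn_levyIntegrand hα w) (F' := fun w x => I * cexp ((I * w - α) * x))
    (by fun_prop : Continuous _).aestronglyMeasurable
    ?_ (exp_neg_integrableOn_Ioi 0 hα) ?_).2
  · refine Eventually.of_forall fun x w _ => ?_
    simp [Complex.norm_exp]
  · filter_upwards [ae_restrict_mem measurableSet_Ioi] with x hx w _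
    exact hasDerivAt_levyIntegrand α (ne_of_gt hx) w

lemma sub_I_mul_mem_slitPlane {α : ℂ} (hα : 0 < α.re) (w : ℝ) : α - I * w ∈ slitPlane :=
  mem_slitPlane_iff.mpr (Or.inl (by simpa using hα))

lemma hasDerivAt_log_sub_log {α : ℂ} (hα : 0 < α.re) (w : ℝ) :
    HasDerivAt (fun w : ℝ => log α - log (α - I * w)) (I / (α - I * w)) w := by
  have hlin : HasDerivAt (fun w : ℝ => α - I * w) (-I) w := by
    simpa using (((hasDerivAt_id (w : ℂ)).const_mul I).comp_ofReal).const_sub α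
  simpa [neg_div] using (hlin.clog_real (sub_I_mul_mem_slitPlane hα w)).const_sub (log α)

lemma integral_levyIntegrand_eq_log_sub_log {α : ℂ} (hα : 0 < α.re) (z : ℝ) :
    ∫ x in Ioi (0 : ℝ), levyIntegrand α z x = log α - log (α - I * z) := by
  refine isOpen_univ.eqOn_of_deriv_eq isPreconnected_univ
    (fun w _ => (hasDerivAt_integral_levyIntegrand hα w).differentiableAt.differentiableWithinAt)
    (fun w _ => (hasDerivAt_log_sub_log hα w).differentiableAt.differentiableWithinAt)
    (fun w _ => ?_) (mem_univ 0) ?_ (mem_univ z)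
  · rw [(hasDerivAt_integral_levyIntegrand hα w).deriv, (hasDerivAt_log_sub_log hα w).deriv]
  · simp [levyIntegrand]

end ExpDistribution

open ExpDistribution

theorem exp_distribution_levy (α : ℂ) (hα : 0 < α.re) (z : ℝ) :
    IntegrableOn
      (fun x : ℝ => (Complex.exp (I * z * x) - 1) * (x : ℂ)⁻¹ * Complex.exp (-α * x))
      (Set.Ioi 0) ∧
    α / (α - I * z) =
      Complex.exp (∫ x in Set.Ioi (0 : ℝ),
        (Complex.exp (I * z * x) - 1) * (x : ℂ)⁻¹ * Complex.exp (-α * x)) := by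
  have hα0 : α ≠ 0 := fun h => by simp [h] at hα
  refine ⟨integrableOn_levyIntegrand hα z, ?_⟩
  change _ = cexp (∫ x in Ioi (0 : ℝ), levyIntegrand α z x)
  rw [integral_levyIntegrand_eq_log_sub_log hα z, Complex.exp_sub, exp_log hα0,
    exp_log (slitPlane_ne_zero (sub_I_mul_mem_slitPlane hα z))]
end

section
/- For all real numbers σ > 1/2, γ ∈ ℝ and t ∈ ℝ, ((σ − 1/2 − iγ − it)/(σ − 1/2 − iγ)) · ((σ − 1/2 + iγ − it)/(σ − 1/2 + iγ)) = exp( −2 ∫₀^∞ (e^{itx} − 1) cos(γx) e^{−(σ−1/2)x} x^{−1} dx ), the integral converging absolutely. -/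
/-!
For `0 < re p, re q`, differentiating along the segment from `p` to `q` gives
`(e^{-px} - e^{-qx}) / x = ∫₀¹ (q - p) e^{-(p + u(q - p))x} du`; the double integral is
absolutely convergent, so Fubini turns it into
`∫₀¹ (q - p) / (p + u(q - p)) du = log q - log p` (a complex Frullani integral).
Writing `cos (γx) = (e^{iγx} + e^{-iγx}) / 2`, the integrand of the theorem is half the sum of
two such Frullani kernels, with `(p, q)` equal to `(σ - 1/2 ∓ iγ - it, σ - 1/2 ∓ iγ)`.
-/

open MeasureTheory Complex Set

namespace ComplexFrullani

variable {p q : ℂ}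

lemma min_re_le_re_segment {u : ℝ} (hu : u ∈ Icc (0 : ℝ) 1) :
    min p.re q.re ≤ (p + u * (q - p)).re := by
  have hre : (p + u * (q - p)).re = (1 - u) * p.re + u * q.re := by
    simp only [add_re, mul_re, ofReal_re, ofReal_im, sub_re, sub_im, zero_mul, sub_zero]
    ring
  rw [hre]
  nlinarith [min_le_left p.re q.re, min_le_right p.re q.re, hu.1, hu.2]

lemma re_segment_pos (hp : 0 < p.re) (hq : 0 < q.re) {u : ℝ} (hu : u ∈ Icc (0 : ℝ) 1) :
    0 < (p + u * (q - p)).re :=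
  (lt_min hp hq).trans_le (min_re_le_re_segment hu)

lemma integral_cexp_neg_mul_Ioi {s : ℂ} (hs : 0 < s.re) :
    ∫ x : ℝ in Ioi 0, cexp (-s * x) = 1 / s := by
  rw [integral_exp_mul_complex_Ioi (by simpa using hs)]
  simp

lemma hasDerivAt_segment (u : ℝ) : HasDerivAt (fun u : ℝ => p + u * (q - p)) (q - p) u := by
  simpa using ((hasDerivAt_id u).ofReal_comp.mul_const (q - p)).const_add p

lemma cexp_sub_cexp_div_eq_intervalIntegral {x : ℝ} (hx : x ≠ 0) :
    (cexp (-p * x) - cexp (-q * x)) / x =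
      ∫ u in (0 : ℝ)..1, (q - p) * cexp (-(p + u * (q - p)) * x) := by
  have hxc : (x : ℂ) ≠ 0 := ofReal_ne_zero.mpr hx
  have hderiv : ∀ u ∈ uIcc (0 : ℝ) 1,
      HasDerivAt (fun u : ℝ => -cexp (-(p + u * (q - p)) * x) / x)
        ((q - p) * cexp (-(p + u * (q - p)) * x)) u := fun u _ => by
    refine (((hasDerivAt_segment (p := p) (q := q) u).neg.mul_const (x : ℂ)).cexp.neg.div_const
      (x : ℂ)).congr_deriv ?_
    simp only [Pi.neg_apply]
    field_simp
  rw [intervalIntegral.integral_eq_sub_of_hasDerivAt hderiv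
    (by apply Continuous.intervalIntegrable; fun_prop)]
  simp only [ofReal_zero, ofReal_one, zero_mul, one_mul, add_zero, add_sub_cancel]
  ring

lemma integrable_segment_kernel (hp : 0 < p.re) (hq : 0 < q.re) :
    Integrable (fun z : ℝ × ℝ => (q - p) * cexp (-(p + z.2 * (q - p)) * z.1))
      ((volume.restrict (Ioi 0)).prod (volume.restrict (Ioc 0 1))) := by
  set m := min p.re q.re
  refine Integrable.mono' (g := fun z : ℝ × ℝ => (‖q - p‖ * Real.exp (-m * z.1)) * 1)
    (Integrable.mul_prod ((exp_neg_integrableOn_Ioi 0 (lt_min hp hq)).const_mul _)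
      (integrableOn_const (by simp))) (Continuous.aestronglyMeasurable (by fun_prop)) ?_
  rw [Measure.prod_restrict]
  filter_upwards [ae_restrict_mem (measurableSet_Ioi.prod measurableSet_Ioc)]
    with z ⟨hz₁, hz₂⟩
  rw [norm_mul, mul_one, norm_exp]
  gcongr
  have hre : (-(p + z.2 * (q - p)) * z.1).re = -(p + z.2 * (q - p)).re * z.1 := by
    simp [mul_re]
  rw [hre]
  nlinarith [min_re_le_re_segment (p := p) (q := q) (Ioc_subset_Icc_self hz₂), mem_Ioi.mp hz₁]

lemma integral_div_segment (hp : 0 < p.re) (hq : 0 < q.re) :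
    ∫ u in (0 : ℝ)..1, (q - p) / (p + u * (q - p)) = log q - log p := by
  have hre : ∀ u ∈ uIcc (0 : ℝ) 1, 0 < (p + u * (q - p)).re := fun u hu =>
    re_segment_pos hp hq (by rwa [uIcc_of_le zero_le_one] at hu)
  have hderiv : ∀ u ∈ uIcc (0 : ℝ) 1,
      HasDerivAt (fun u : ℝ => log (p + u * (q - p))) ((q - p) / (p + u * (q - p))) u :=
    fun u hu => (hasDerivAt_segment u).clog_real (Or.inl (hre u hu))
  have hcont : ContinuousOn (fun u : ℝ => (q - p) / (p + u * (q - p))) (uIcc 0 1) :=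
    continuousOn_const.div (by fun_prop) fun u hu h => (hre u hu).ne' (by rw [h, zero_re])
  rw [intervalIntegral.integral_eq_sub_of_hasDerivAt hderiv hcont.intervalIntegrable]
  simp

theorem integrableOn_cexp_sub_cexp_div (hp : 0 < p.re) (hq : 0 < q.re) :
    IntegrableOn (fun x : ℝ => (cexp (-p * x) - cexp (-q * x)) / x) (Ioi 0) := by
  refine IntegrableOn.congr_fun (integrable_segment_kernel hp hq).integral_prod_left
    (fun x hx => ?_) measurableSet_Ioi
  rw [cexp_sub_cexp_div_eq_intervalIntegral (mem_Ioi.mp hx).ne',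
    intervalIntegral.integral_of_le zero_le_one]

theorem integral_cexp_sub_cexp_div (hp : 0 < p.re) (hq : 0 < q.re) :
    ∫ x in Ioi (0 : ℝ), (cexp (-p * x) - cexp (-q * x)) / x = log q - log p := by
  calc ∫ x in Ioi (0 : ℝ), (cexp (-p * x) - cexp (-q * x)) / x
      = ∫ x in Ioi (0 : ℝ), ∫ u in Ioc (0 : ℝ) 1,
          (q - p) * cexp (-(p + u * (q - p)) * x) := by
        refine setIntegral_congr_fun measurableSet_Ioi fun x hx => ?_
        rw [cexp_sub_cexp_div_eq_intervalIntegral (mem_Ioi.mp hx).ne',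
          intervalIntegral.integral_of_le zero_le_one]
    _ = ∫ u in Ioc (0 : ℝ) 1, ∫ x in Ioi (0 : ℝ), (q - p) * cexp (-(p + u * (q - p)) * x) :=
        integral_integral_swap (integrable_segment_kernel hp hq)
    _ = ∫ u in (0 : ℝ)..1, (q - p) / (p + u * (q - p)) := by
        rw [intervalIntegral.integral_of_le zero_le_one]
        refine setIntegral_congr_fun measurableSet_Ioc fun u hu => ?_
        rw [integral_const_mul,
          integral_cexp_neg_mul_Ioi (re_segment_pos hp hq (Ioc_subset_Icc_self hu)), mul_one_div]
    _ = log q - log p := integral_div_segment hp hq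

end ComplexFrullani

lemma levy_integrand_eq_half_sum (a γ t : ℝ) :
    (fun x : ℝ => (cexp (I * t * x) - 1) * (Real.cos (γ * x) : ℂ) *
        (Real.exp (-a * x) : ℂ) / (x : ℂ)) =
      fun x : ℝ => 2⁻¹ * ((cexp (-(a - I * γ - I * t) * x) - cexp (-(a - I * γ) * x)) / x +
        (cexp (-(a + I * γ - I * t) * x) - cexp (-(a + I * γ) * x)) / x) := by
  funext x
  have e₁ : cexp (-(a - I * γ - I * t) * x) =
      cexp (I * t * x) * cexp (γ * x * I) * cexp (-a * x) := by
    rw [← exp_add, ← exp_add]; ring_nf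
  have e₂ : cexp (-(a - I * γ) * x) = cexp (γ * x * I) * cexp (-a * x) := by
    rw [← exp_add]; ring_nf
  have e₃ : cexp (-(a + I * γ - I * t) * x) =
      cexp (I * t * x) * cexp (-(γ * x) * I) * cexp (-a * x) := by
    rw [← exp_add, ← exp_add]; ring_nf
  have e₄ : cexp (-(a + I * γ) * x) = cexp (-(γ * x) * I) * cexp (-a * x) := by
    rw [← exp_add]; ring_nf
  rw [e₁, e₂, e₃, e₄, ofReal_cos, ofReal_exp, cos]
  push_cast
  ring

open ComplexFrullani in
theorem pair_of_zeros_levy (σ γ t : ℝ) (hσ : 1 / 2 < σ) :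
    IntegrableOn
      (fun x : ℝ => (Complex.exp (I * t * x) - 1) * (Real.cos (γ * x) : ℂ) *
        (Real.exp (-(σ - 1 / 2) * x) : ℂ) / (x : ℂ))
      (Set.Ioi 0) ∧
    (((σ : ℂ) - 1 / 2 - I * γ - I * t) / ((σ : ℂ) - 1 / 2 - I * γ)) *
        (((σ : ℂ) - 1 / 2 + I * γ - I * t) / ((σ : ℂ) - 1 / 2 + I * γ)) =
      Complex.exp (-2 * ∫ x in Set.Ioi (0 : ℝ),
        (Complex.exp (I * t * x) - 1) * (Real.cos (γ * x) : ℂ) *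
          (Real.exp (-(σ - 1 / 2) * x) : ℂ) / (x : ℂ)) := by
  set a := σ - 1 / 2
  have ha : 0 < a := sub_pos.mpr hσ
  have hcast : (σ : ℂ) - 1 / 2 = (a : ℂ) := by push_cast [a]; ring
  have h₁ : 0 < ((a : ℂ) - I * γ - I * t).re := by simpa using ha
  have h₂ : 0 < ((a : ℂ) - I * γ).re := by simpa using ha
  have h₃ : 0 < ((a : ℂ) + I * γ - I * t).re := by simpa using ha
  have h₄ : 0 < ((a : ℂ) + I * γ).re := by simpa using ha
  have hint₁ := integrableOn_cexp_sub_cexp_div h₁ h₂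
  have hint₂ := integrableOn_cexp_sub_cexp_div h₃ h₄
  rw [hcast, levy_integrand_eq_half_sum]
  refine ⟨(hint₁.add hint₂).const_mul _, ?_⟩
  rw [integral_const_mul, integral_add hint₁ hint₂, integral_cexp_sub_cexp_div h₁ h₂,
    integral_cexp_sub_cexp_div h₃ h₄,
    show ∀ z : ℂ, -2 * (2⁻¹ * z) = -z from fun z => by ring,
    neg_add, neg_sub, neg_sub, exp_add, exp_sub, exp_sub, exp_log (ne_zero_of_re_pos h₁),
    exp_log (ne_zero_of_re_pos h₂), exp_log (ne_zero_of_re_pos h₃),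
    exp_log (ne_zero_of_re_pos h₄)]
end
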